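/- arXiv:2503.14549 — 6 statements merged into one kernel-verified Lean document; each statement's English description precedes it below -/
import Mathlib

section
/- The value function of the entropy-regularized MDP is linearly solvable: defining Ψ_τ(s) as the minimum over control kernels (p_t)_{t=τ}^{T-1} of the expected cost Σ_{t=τ}^{T-1} E[log(p_t(X_{t+1}|X_t)/p_t^{prior}(X_{t+1}|X_t))] + E[E^{prior}(X_T)] starting from X_τ = s, the exponentiated value u_τ = exp(-Ψ_τ) satisfies the linear backward recursion u_τ(s) = Σ_{s'} p_τ^{prior}(s'|s) u_{τ+1}(s'), with u_T = exp(-E^{prior}). -/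
/-- Marginals of a Markov chain with kernels `q`, started at state `s0` at time `τ`;
`marg q τ s0 k` is the distribution after `k` steps (i.e. at time `τ + k`). -/
noncomputable def marg {S : Type*} [Fintype S] [DecidableEq S]
    (q : ℕ → S → S → ℝ) (τ : ℕ) (s0 : S) : ℕ → S → ℝ
  | 0, s => if s = s0 then 1 else 0
  | k + 1, s' => ∑ s, marg q τ s0 k s * q (τ + k) s s'

noncomputable def uval {S : Type*} [Fintype S] (T : ℕ) (p : ℕ → S → S → ℝ)
    (Eprior : S → ℝ) : ℕ → S → ℝ := fun t =>
  if _h : t < T then fun s => ∑ s', p t s s' * uval T p Eprior (t + 1) s'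
  else fun s => Real.exp (-Eprior s)
termination_by t => T - t

lemma uval_lt {S : Type*} [Fintype S] {T : ℕ} {p : ℕ → S → S → ℝ}
    {Eprior : S → ℝ} {t : ℕ} (h : t < T) (s : S) :
    uval T p Eprior t s = ∑ s', p t s s' * uval T p Eprior (t + 1) s' := by
  rw [uval]; simp [h]

lemma uval_ge {S : Type*} [Fintype S] {T : ℕ} {p : ℕ → S → S → ℝ}
    {Eprior : S → ℝ} {t : ℕ} (h : ¬ t < T) (s : S) :
    uval T p Eprior t s = Real.exp (-Eprior s) := by
  rw [uval]; simp [h]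

lemma uval_pos {S : Type*} [Fintype S] {T : ℕ} {p : ℕ → S → S → ℝ}
    (hp : ∀ t, t < T → ∀ s : S, (∀ s', 0 ≤ p t s s') ∧ ∑ s', p t s s' = 1)
    {Eprior : S → ℝ} (t : ℕ) (s : S) : 0 < uval T p Eprior t s := by
  by_cases h : t < T
  · rw [uval_lt h]
    obtain ⟨hnn, hsum⟩ := hp t h s
    have hex : ∃ s', 0 < p t s s' := by
      by_contra hc
      push_neg at hc
      have h0 : ∀ s', p t s s' = 0 := fun s' => le_antisymm (hc s') (hnn s')
      simp [h0] at hsum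
    obtain ⟨s', hs'⟩ := hex
    exact Finset.sum_pos'
      (fun i _ => mul_nonneg (hnn i) (uval_pos hp (t + 1) i).le)
      ⟨s', Finset.mem_univ _, mul_pos hs' (uval_pos hp (t + 1) s')⟩
  · rw [uval_ge h]; positivity
termination_by T - t
decreasing_by all_goals omega

lemma sum_swap_mul {S : Type*} [Fintype S] (a : S → ℝ) (b : S → S → ℝ) (c : S → ℝ) :
    ∑ z, (∑ w, a w * b w z) * c z = ∑ w, a w * ∑ z, b w z * c z := by
  simp_rw [Finset.sum_mul, Finset.mul_sum]
  rw [Finset.sum_comm]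
  exact Finset.sum_congr rfl fun w _ => Finset.sum_congr rfl fun z _ => by ring

lemma marg_shift {S : Type*} [Fintype S] [DecidableEq S]
    (q : ℕ → S → S → ℝ) (τ : ℕ) (s : S) :
    ∀ k x, marg q τ s (k + 1) x = ∑ w, q τ s w * marg q (τ + 1) w k x := by
  intro k
  induction k with
  | zero => intro x; simp [marg]
  | succ k ih =>
    intro x
    have h1 : τ + (k + 1) = (τ + 1) + k := by omega
    calc marg q τ s (k + 2) x = ∑ z, marg q τ s (k + 1) z * q (τ + (k + 1)) z x := rfl
      _ = ∑ z, (∑ w, q τ s w * marg q (τ + 1) w k z) * q ((τ + 1) + k) z x := by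
          rw [h1]; exact Finset.sum_congr rfl fun z _ => by rw [ih]
      _ = ∑ w, q τ s w * ∑ z, marg q (τ + 1) w k z * q ((τ + 1) + k) z x :=
          sum_swap_mul _ _ _
      _ = ∑ w, q τ s w * marg q (τ + 1) w (k + 1) x := rfl

noncomputable def cost {S : Type*} [Fintype S] [DecidableEq S] (T : ℕ)
    (p : ℕ → S → S → ℝ) (Eprior : S → ℝ) (q : ℕ → S → S → ℝ) (τ : ℕ) (s : S) : ℝ :=
  (∑ k ∈ Finset.range (T - τ), ∑ x, ∑ y,
      marg q τ s k x * (q (τ + k) x y * Real.log (q (τ + k) x y / p (τ + k) x y)))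
    + ∑ z, marg q τ s (T - τ) z * Eprior z

lemma cost_terminal {S : Type*} [Fintype S] [DecidableEq S] {T : ℕ}
    {p : ℕ → S → S → ℝ} {Eprior : S → ℝ} (q : ℕ → S → S → ℝ) (s : S) :
    cost T p Eprior q T s = Eprior s := by
  simp [cost, marg]

lemma cost_rec {S : Type*} [Fintype S] [DecidableEq S] {T : ℕ}
    {p : ℕ → S → S → ℝ} {Eprior : S → ℝ} (q : ℕ → S → S → ℝ) {τ : ℕ}
    (h : τ < T) (s : S) :
    cost T p Eprior q τ s
      = (∑ y, q τ s y * Real.log (q τ s y / p τ s y))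
        + ∑ w, q τ s w * cost T p Eprior q (τ + 1) w := by
  have hm : T - τ = (T - (τ + 1)) + 1 := by omega
  set m := T - (τ + 1) with hmdef
  unfold cost
  rw [hm, Finset.sum_range_succ']
  have hF0 : (∑ x, ∑ y, marg q τ s 0 x * (q (τ + 0) x y * Real.log (q (τ + 0) x y / p (τ + 0) x y)))
      = ∑ y, q τ s y * Real.log (q τ s y / p τ s y) := by
    simp [marg]
  have hFk : ∀ k, (∑ x, ∑ y, marg q τ s (k + 1) x *
        (q (τ + (k + 1)) x y * Real.log (q (τ + (k + 1)) x y / p (τ + (k + 1)) x y)))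
      = ∑ w, q τ s w * (∑ x, ∑ y, marg q (τ + 1) w k x *
        (q ((τ + 1) + k) x y * Real.log (q ((τ + 1) + k) x y / p ((τ + 1) + k) x y))) := by
    intro k
    have h1 : τ + (k + 1) = (τ + 1) + k := by omega
    rw [h1]
    set G : S → S → ℝ := fun x y =>
      q ((τ + 1) + k) x y * Real.log (q ((τ + 1) + k) x y / p ((τ + 1) + k) x y) with hG
    calc (∑ x, ∑ y, marg q τ s (k + 1) x * G x y)
        = ∑ x, marg q τ s (k + 1) x * ∑ y, G x y := by
          exact Finset.sum_congr rfl fun x _ => (Finset.mul_sum _ _ _).symm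
      _ = ∑ x, (∑ w, q τ s w * marg q (τ + 1) w k x) * ∑ y, G x y := by
          exact Finset.sum_congr rfl fun x _ => by rw [marg_shift]
      _ = ∑ w, q τ s w * ∑ x, marg q (τ + 1) w k x * ∑ y, G x y :=
          sum_swap_mul _ _ _
      _ = ∑ w, q τ s w * (∑ x, ∑ y, marg q (τ + 1) w k x * G x y) := by
          refine Finset.sum_congr rfl fun w _ => ?_
          congr 1
          exact Finset.sum_congr rfl fun x _ => Finset.mul_sum _ _ _
  have hT : (∑ z, marg q τ s (m + 1) z * Eprior z)
      = ∑ w, q τ s w * ∑ z, marg q (τ + 1) w m z * Eprior z := by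
    calc (∑ z, marg q τ s (m + 1) z * Eprior z)
        = ∑ z, (∑ w, q τ s w * marg q (τ + 1) w m z) * Eprior z := by
          exact Finset.sum_congr rfl fun z _ => by rw [marg_shift]
      _ = ∑ w, q τ s w * ∑ z, marg q (τ + 1) w m z * Eprior z := sum_swap_mul _ _ _
  rw [hF0, hT]
  have hmid : (∑ k ∈ Finset.range m, ∑ x, ∑ y, marg q τ s (k + 1) x *
        (q (τ + (k + 1)) x y * Real.log (q (τ + (k + 1)) x y / p (τ + (k + 1)) x y)))
      = ∑ w, q τ s w * ∑ k ∈ Finset.range m, ∑ x, ∑ y, marg q (τ + 1) w k x *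
        (q ((τ + 1) + k) x y * Real.log (q ((τ + 1) + k) x y / p ((τ + 1) + k) x y)) := by
    calc _ = ∑ k ∈ Finset.range m, ∑ w, q τ s w * (∑ x, ∑ y, marg q (τ + 1) w k x *
          (q ((τ + 1) + k) x y * Real.log (q ((τ + 1) + k) x y / p ((τ + 1) + k) x y))) :=
          Finset.sum_congr rfl fun k _ => hFk k
      _ = _ := by
          rw [Finset.sum_comm]
          exact Finset.sum_congr rfl fun w _ => (Finset.mul_sum _ _ _).symm
  rw [hmid, ← hmdef]
  simp_rw [mul_add, Finset.sum_add_distrib]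
  ring


lemma gibbs {S : Type*} [Fintype S] (prow qrow v : S → ℝ)
    (hq0 : ∀ y, 0 ≤ qrow y) (hq1 : ∑ y, qrow y = 1)
    (hp0 : ∀ y, 0 ≤ prow y) (hp1 : ∑ y, prow y = 1)
    (habs : ∀ y, prow y = 0 → qrow y = 0) (hv : ∀ y, 0 < v y) :
    -Real.log (∑ y, prow y * v y)
      ≤ ∑ y, qrow y * (Real.log (qrow y / prow y) - Real.log (v y)) := by
  set Z := ∑ y, prow y * v y with hZ
  have hZpos : 0 < Z := by
    have hex : ∃ y, 0 < prow y := by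
      by_contra hc
      push_neg at hc
      have h0 : ∀ y, prow y = 0 := fun y => le_antisymm (hc y) (hp0 y)
      simp [h0] at hp1
    obtain ⟨y, hy⟩ := hex
    exact Finset.sum_pos' (fun i _ => mul_nonneg (hp0 i) (hv i).le)
      ⟨y, Finset.mem_univ _, mul_pos hy (hv y)⟩
  rw [neg_le, ← sub_nonneg]
  have key : ∀ y, qrow y - prow y * v y / Z
      ≤ qrow y * (Real.log (qrow y / prow y) - Real.log (v y)) + qrow y * Real.log Z := by
    intro y
    rcases eq_or_lt_of_le (hq0 y) with h0 | hqy
    · rw [← h0]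
      simp only [zero_mul, zero_sub, zero_add]
      have : 0 ≤ prow y * v y / Z := div_nonneg (mul_nonneg (hp0 y) (hv y).le) hZpos.le
      linarith
    · have hpy : 0 < prow y := by
        rcases eq_or_lt_of_le (hp0 y) with h0' | h
        · exact absurd (habs y h0'.symm) (by linarith)
        · exact h
      have hvy := hv y
      have harg : (0:ℝ) < prow y * v y / (qrow y * Z) := by positivity
      have hlog := Real.log_le_sub_one_of_pos harg
      have hexp : Real.log (prow y * v y / (qrow y * Z))
          = -(Real.log (qrow y / prow y) - Real.log (v y)) - Real.log Z := by
        rw [Real.log_div (by positivity) (by positivity), Real.log_mul (by positivity) (by positivity),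
          Real.log_mul (by positivity) (by positivity),
          Real.log_div (by positivity) (by positivity)]
        ring
      rw [hexp] at hlog
      have := mul_le_mul_of_nonneg_left hlog (hq0 y)
      -- qrow y * (-(A) - log Z) ≤ qrow y * (prow y * v y/(qrow y * Z) - 1)
      have hq' : qrow y * (prow y * v y / (qrow y * Z)) = prow y * v y / Z := by
        field_simp
      nlinarith [this, hq']
  have hsum : ∑ y, (qrow y - prow y * v y / Z)
      ≤ ∑ y, (qrow y * (Real.log (qrow y / prow y) - Real.log (v y)) + qrow y * Real.log Z) :=
    Finset.sum_le_sum (fun y _ => key y)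
  rw [Finset.sum_sub_distrib, Finset.sum_add_distrib, ← Finset.sum_mul, hq1, one_mul,
    ← Finset.sum_div, ← hZ, div_self hZpos.ne'] at hsum
  linarith

noncomputable def qstar {S : Type*} [Fintype S] [DecidableEq S] (T : ℕ)
    (p : ℕ → S → S → ℝ) (Eprior : S → ℝ) : ℕ → S → S → ℝ := fun t x y =>
  if t < T then p t x y * uval T p Eprior (t + 1) y / uval T p Eprior t x
  else if y = x then 1 else 0

lemma qstar_adm {S : Type*} [Fintype S] [DecidableEq S] {T : ℕ} {p : ℕ → S → S → ℝ}
    (hp : ∀ t, t < T → ∀ s : S, (∀ s', 0 ≤ p t s s') ∧ ∑ s', p t s s' = 1)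
    (Eprior : S → ℝ) :
    (∀ t, t < T → ∀ x : S, (∀ y, 0 ≤ qstar T p Eprior t x y) ∧ ∑ y, qstar T p Eprior t x y = 1)
    ∧ (∀ t, t < T → ∀ x y : S, p t x y = 0 → qstar T p Eprior t x y = 0) := by
  constructor
  · intro t ht x
    have hu := uval_pos hp (Eprior := Eprior) t x
    constructor
    · intro y
      simp only [qstar, if_pos ht]
      exact div_nonneg (mul_nonneg ((hp t ht x).1 y) (uval_pos hp (t+1) y).le) hu.le
    · simp only [qstar, if_pos ht]
      rw [← Finset.sum_div, ← uval_lt ht, div_self hu.ne']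
  · intro t ht x y h0
    simp [qstar, if_pos ht, h0]

lemma main_lemma {S : Type*} [Fintype S] [DecidableEq S] {T : ℕ} {p : ℕ → S → S → ℝ}
    (hp : ∀ t, t < T → ∀ s : S, (∀ s', 0 ≤ p t s s') ∧ ∑ s', p t s s' = 1)
    (Eprior : S → ℝ) :
    ∀ n τ, τ + n = T → ∀ s : S,
      (∀ q : ℕ → S → S → ℝ,
        (∀ t, t < T → ∀ x : S, (∀ y, 0 ≤ q t x y) ∧ ∑ y, q t x y = 1) →
        (∀ t, t < T → ∀ x y : S, p t x y = 0 → q t x y = 0) →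
        -Real.log (uval T p Eprior τ s) ≤ cost T p Eprior q τ s)
      ∧ cost T p Eprior (qstar T p Eprior) τ s = -Real.log (uval T p Eprior τ s) := by
  intro n
  induction n with
  | zero =>
    intro τ hτ s
    have hτT : τ = T := by omega
    subst hτT
    have hu : uval τ p Eprior τ s = Real.exp (-Eprior s) := uval_ge (lt_irrefl _) s
    constructor
    · intro q _ _
      rw [cost_terminal, hu, Real.log_exp, neg_neg]
    · rw [cost_terminal, hu, Real.log_exp, neg_neg]
  | succ n ih =>
    intro τ hτ s
    have hτT : τ < T := by omega
    have hrec : τ + 1 + n = T := by omega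
    have huτ : uval T p Eprior τ s = ∑ s', p τ s s' * uval T p Eprior (τ + 1) s' :=
      uval_lt hτT s
    have hupos : ∀ t (x : S), 0 < uval T p Eprior t x := fun t x => uval_pos hp t x
    constructor
    · intro q hq1 hq2
      rw [cost_rec q hτT s]
      have hstep : -Real.log (∑ s', p τ s s' * uval T p Eprior (τ + 1) s')
          ≤ (∑ y, q τ s y * Real.log (q τ s y / p τ s y))
            + ∑ w, q τ s w * (-Real.log (uval T p Eprior (τ + 1) w)) := by
        have := gibbs (p τ s) (q τ s) (uval T p Eprior (τ + 1))
          (hq1 τ hτT s).1 (hq1 τ hτT s).2 (hp τ hτT s).1 (hp τ hτT s).2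
          (fun y => hq2 τ hτT s y) (fun y => hupos (τ + 1) y)
        calc -Real.log (∑ s', p τ s s' * uval T p Eprior (τ + 1) s')
            ≤ ∑ y, q τ s y * (Real.log (q τ s y / p τ s y)
                - Real.log (uval T p Eprior (τ + 1) y)) := this
          _ = _ := by
              rw [← Finset.sum_add_distrib]
              exact Finset.sum_congr rfl fun y _ => by ring
      rw [huτ]
      refine le_trans hstep ?_
      have : ∑ w, q τ s w * (-Real.log (uval T p Eprior (τ + 1) w))
          ≤ ∑ w, q τ s w * cost T p Eprior q (τ + 1) w :=
        Finset.sum_le_sum fun w _ =>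
          mul_le_mul_of_nonneg_left ((ih (τ + 1) hrec w).1 q hq1 hq2) ((hq1 τ hτT s).1 w)
      linarith
    · rw [cost_rec _ hτT s]
      obtain ⟨hadm1, hadm2⟩ := qstar_adm hp Eprior
      have hqs : ∀ y, qstar T p Eprior τ s y
          = p τ s y * uval T p Eprior (τ + 1) y / uval T p Eprior τ s := by
        intro y; simp [qstar, if_pos hτT]
      have hstep : ∀ y : S, qstar T p Eprior τ s y *
            Real.log (qstar T p Eprior τ s y / p τ s y)
          = qstar T p Eprior τ s y *
            (Real.log (uval T p Eprior (τ + 1) y) - Real.log (uval T p Eprior τ s)) := by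
        intro y
        rcases eq_or_lt_of_le ((hp τ hτT s).1 y) with h0 | hpy
        · rw [hqs y, ← h0]
          simp
        · congr 1
          rw [hqs y]
          have h1 : p τ s y * uval T p Eprior (τ + 1) y / uval T p Eprior τ s / p τ s y
              = uval T p Eprior (τ + 1) y / uval T p Eprior τ s := by
            rw [div_div, mul_comm (uval T p Eprior τ s), ← div_div,
              mul_div_assoc, mul_comm (p τ s y), mul_div_assoc]
            field_simp [hpy.ne']
          rw [h1, Real.log_div (hupos (τ + 1) y).ne' (hupos τ s).ne']
      have hsum1 : ∑ y, qstar T p Eprior τ s y = 1 := (hadm1 τ hτT s).2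
      have hih : ∀ w, cost T p Eprior (qstar T p Eprior) (τ + 1) w
          = -Real.log (uval T p Eprior (τ + 1) w) := fun w => (ih (τ + 1) hrec w).2
      calc (∑ y, qstar T p Eprior τ s y * Real.log (qstar T p Eprior τ s y / p τ s y))
            + ∑ w, qstar T p Eprior τ s w * cost T p Eprior (qstar T p Eprior) (τ + 1) w
          = (∑ y, qstar T p Eprior τ s y *
              (Real.log (uval T p Eprior (τ + 1) y) - Real.log (uval T p Eprior τ s)))
            + ∑ w, qstar T p Eprior τ s w * (-Real.log (uval T p Eprior (τ + 1) w)) := by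
            have e1 := Finset.sum_congr rfl fun y (_ : y ∈ Finset.univ) => hstep y
            have e2 : (∑ w, qstar T p Eprior τ s w * cost T p Eprior (qstar T p Eprior) (τ + 1) w)
                = ∑ w, qstar T p Eprior τ s w * (-Real.log (uval T p Eprior (τ + 1) w)) :=
              Finset.sum_congr rfl fun w _ => by rw [hih w]
            rw [e1, e2]
        _ = ∑ y, qstar T p Eprior τ s y * (-Real.log (uval T p Eprior τ s)) := by
            rw [← Finset.sum_add_distrib]
            exact Finset.sum_congr rfl fun y _ => by ring
        _ = -Real.log (uval T p Eprior τ s) := by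
            rw [← Finset.sum_mul, hsum1, one_mul]

/-- linear solvability of the entropy-regularized MDP: the exponentiated
value function `u_τ = exp(-Ψ_τ)` of the KL-control problem with terminal cost
`E^prior` satisfies the linear backward recursion driven by the prior kernels,
with `u_T = exp(-E^prior)`. -/
theorem linearly_solvable_mdp
    {S : Type*} [Fintype S] [DecidableEq S] (T : ℕ) (p : ℕ → S → S → ℝ)
    (hp : ∀ t, t < T → ∀ s : S, (∀ s', 0 ≤ p t s s') ∧ ∑ s', p t s s' = 1)
    (Eprior : S → ℝ)
    (Ψ : ℕ → S → ℝ)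
    (hΨ : ∀ τ, τ ≤ T → ∀ s : S,
      Ψ τ s = sInf { c : ℝ | ∃ q : ℕ → S → S → ℝ,
        (∀ t, t < T → ∀ x : S, (∀ y, 0 ≤ q t x y) ∧ ∑ y, q t x y = 1) ∧
        (∀ t, t < T → ∀ x y : S, p t x y = 0 → q t x y = 0) ∧
        c = (∑ k ∈ Finset.range (T - τ), ∑ x, ∑ y,
              marg q τ s k x *
                (q (τ + k) x y * Real.log (q (τ + k) x y / p (τ + k) x y)))
            + ∑ z, marg q τ s (T - τ) z * Eprior z }) :
    (∀ s : S, Real.exp (-Ψ T s) = Real.exp (-Eprior s)) ∧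
    (∀ τ, τ < T → ∀ s : S,
      Real.exp (-Ψ τ s) = ∑ s', p τ s s' * Real.exp (-Ψ (τ + 1) s')) := by
  have key : ∀ τ, τ ≤ T → ∀ s : S, Ψ τ s = -Real.log (uval T p Eprior τ s) := by
    intro τ hτ s
    rw [hΨ τ hτ s]
    obtain ⟨hlow, hopt⟩ := main_lemma hp Eprior (T - τ) τ (by omega) s
    have hmem : -Real.log (uval T p Eprior τ s) ∈
        { c : ℝ | ∃ q : ℕ → S → S → ℝ,
          (∀ t, t < T → ∀ x : S, (∀ y, 0 ≤ q t x y) ∧ ∑ y, q t x y = 1) ∧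
          (∀ t, t < T → ∀ x y : S, p t x y = 0 → q t x y = 0) ∧
          c = (∑ k ∈ Finset.range (T - τ), ∑ x, ∑ y,
                marg q τ s k x *
                  (q (τ + k) x y * Real.log (q (τ + k) x y / p (τ + k) x y)))
              + ∑ z, marg q τ s (T - τ) z * Eprior z } :=
      ⟨qstar T p Eprior, (qstar_adm hp Eprior).1, (qstar_adm hp Eprior).2, hopt.symm⟩
    have hlb : ∀ c ∈ { c : ℝ | ∃ q : ℕ → S → S → ℝ,
          (∀ t, t < T → ∀ x : S, (∀ y, 0 ≤ q t x y) ∧ ∑ y, q t x y = 1) ∧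
          (∀ t, t < T → ∀ x y : S, p t x y = 0 → q t x y = 0) ∧
          c = (∑ k ∈ Finset.range (T - τ), ∑ x, ∑ y,
                marg q τ s k x *
                  (q (τ + k) x y * Real.log (q (τ + k) x y / p (τ + k) x y)))
              + ∑ z, marg q τ s (T - τ) z * Eprior z },
        -Real.log (uval T p Eprior τ s) ≤ c := by
      rintro c ⟨q, h1, h2, rfl⟩
      exact hlow q h1 h2
    exact le_antisymm (csInf_le ⟨_, fun c hc => hlb c hc⟩ hmem) (le_csInf ⟨_, hmem⟩ hlb)
  constructor
  · intro s
    rw [key T le_rfl s, uval_ge (lt_irrefl T) s, Real.log_exp, neg_neg]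
  · intro τ hτ s
    rw [key τ hτ.le s, neg_neg, Real.exp_log (uval_pos hp τ s), uval_lt hτ s]
    refine Finset.sum_congr rfl fun s' _ => ?_
    rw [key (τ + 1) (by omega) s', neg_neg, Real.exp_log (uval_pos hp (τ + 1) s')]
end

section
/- The optimal cost of the KL control problem equals the KL divergence to the target path measure: for path measures, min over Markov kernels p of KL(P || P^{prior}) subject to the terminal marginal of P being π_T^{target} is achieved by the h-transform kernels, and the optimal value equals KL(π_T^{target} || π_T^{prior}). -/
/-- Law of the Markov chain with kernels `q` started at `s0`, as a measure on paths. -/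
noncomputable def pathLaw {S : Type*} [Fintype S] [DecidableEq S] (T : ℕ)
    (q : ℕ → S → S → ℝ) (s0 : S) (f : Fin (T + 1) → S) : ℝ :=
  (if f 0 = s0 then (1 : ℝ) else 0) * ∏ t : Fin T, q t (f t.castSucc) (f t.succ)

section Aux

variable {S : Type*} [Fintype S] [DecidableEq S]

lemma marg_zero (q : ℕ → S → S → ℝ) (τ : ℕ) (s0 s : S) :
    marg q τ s0 0 s = if s = s0 then 1 else 0 := by simp [marg]

lemma marg_succ (q : ℕ → S → S → ℝ) (τ : ℕ) (s0 : S) (k : ℕ) (s' : S) :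
    marg q τ s0 (k + 1) s' = ∑ s, marg q τ s0 k s * q (τ + k) s s' := by simp [marg]

lemma marg_nonneg (q : ℕ → S → S → ℝ) (s0 : S) (k : ℕ)
    (hq : ∀ t, t < k → ∀ s s', 0 ≤ q t s s') (s : S) : 0 ≤ marg q 0 s0 k s := by
  induction k generalizing s with
  | zero => rw [marg_zero]; positivity
  | succ k ih =>
    rw [marg_succ]
    refine Finset.sum_nonneg fun x _ => mul_nonneg
      (ih (fun t ht => hq t (ht.trans (Nat.lt_succ_self k))) x) ?_
    rw [zero_add]
    exact hq k (Nat.lt_succ_self k) x s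

lemma sum_pathLaw_mul (T : ℕ) (q : ℕ → S → S → ℝ) (s0 : S) (g : S → ℝ) :
    ∑ f : Fin (T + 1) → S, pathLaw T q s0 f * g (f (Fin.last T)) =
      ∑ s, marg q 0 s0 T s * g s := by
  induction T generalizing g with
  | zero =>
    rw [← Equiv.sum_comp (Equiv.funUnique (Fin 1) S).symm
        (fun f => pathLaw 0 q s0 f * g (f (Fin.last 0)))]
    simp [pathLaw, marg_zero]
  | succ T ih =>
    rw [← Equiv.sum_comp (Fin.snocEquiv (fun _ : Fin (T + 2) => S))
        (fun f => pathLaw (T + 1) q s0 f * g (f (Fin.last (T + 1))))]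
    have key : ∀ (x : S) (f' : Fin (T + 1) → S),
        pathLaw (T + 1) q s0 (Fin.snoc f' x) =
          pathLaw T q s0 f' * q T (f' (Fin.last T)) x := by
      intro x f'
      unfold pathLaw
      rw [Fin.prod_univ_castSucc]
      simp only [Fin.snoc_castSucc, Fin.succ_castSucc, Fin.snoc_last, Fin.succ_last,
        Fin.coe_castSucc, Fin.val_last]
      have h0 : (Fin.snoc f' x : Fin (T + 2) → S) 0 = f' 0 := by
        rw [← Fin.castSucc_zero, Fin.snoc_castSucc]
      rw [h0, mul_assoc]
    rw [Fintype.sum_prod_type]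
    calc ∑ x : S, ∑ f' : Fin (T + 1) → S,
          pathLaw (T + 1) q s0 (Fin.snocEquiv (fun _ => S) (x, f')) *
            g ((Fin.snocEquiv (fun _ => S) (x, f')) (Fin.last (T + 1)))
        = ∑ x : S, ∑ f' : Fin (T + 1) → S,
            pathLaw T q s0 f' * (q T (f' (Fin.last T)) x * g x) := by
          refine Finset.sum_congr rfl fun x _ => Finset.sum_congr rfl fun f' _ => ?_
          have he : (Fin.snocEquiv (fun _ : Fin (T + 2) => S) (x, f')) = Fin.snoc f' x := rfl
          rw [he, key x f', Fin.snoc_last, mul_assoc]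
      _ = ∑ f' : Fin (T + 1) → S,
            pathLaw T q s0 f' * ∑ x : S, q T (f' (Fin.last T)) x * g x := by
          rw [Finset.sum_comm]
          exact Finset.sum_congr rfl fun f' _ => (Finset.mul_sum _ _ _).symm
      _ = ∑ s'', marg q 0 s0 T s'' * ∑ x : S, q T s'' x * g x :=
          ih (fun s'' => ∑ x : S, q T s'' x * g x)
      _ = ∑ s'', ∑ x : S, marg q 0 s0 T s'' * (q T s'' x * g x) :=
          Finset.sum_congr rfl fun s'' _ => Finset.mul_sum _ _ _
      _ = ∑ x : S, ∑ s'', marg q 0 s0 T s'' * (q T s'' x * g x) := Finset.sum_comm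
      _ = ∑ s, marg q 0 s0 (T + 1) s * g s := by
          refine Finset.sum_congr rfl fun s _ => ?_
          rw [marg_succ, zero_add, Finset.sum_mul]
          exact Finset.sum_congr rfl fun s'' _ => by ring


end Aux

lemma log_sum_inequality {ι : Type*} (s : Finset ι) (a b : ι → ℝ)
    (ha : ∀ i ∈ s, 0 ≤ a i) (hb : ∀ i ∈ s, 0 ≤ b i)
    (hab : ∀ i ∈ s, b i = 0 → a i = 0) :
    (∑ i ∈ s, a i) * Real.log ((∑ i ∈ s, a i) / ∑ i ∈ s, b i) ≤
      ∑ i ∈ s, a i * Real.log (a i / b i) := by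
  by_cases hB : ∑ i ∈ s, b i = 0
  · have hb0 : ∀ i ∈ s, b i = 0 := (Finset.sum_eq_zero_iff_of_nonneg hb).mp hB
    have ha0 : ∀ i ∈ s, a i = 0 := fun i hi => hab i hi (hb0 i hi)
    rw [Finset.sum_eq_zero ha0, zero_mul]
    exact le_of_eq (Finset.sum_eq_zero fun i hi => by rw [ha0 i hi, zero_mul]).symm
  · set B := ∑ i ∈ s, b i with hBdef
    have hBpos : 0 < B := lt_of_le_of_ne (Finset.sum_nonneg hb) (Ne.symm hB)
    have h1 : ∑ i ∈ s, b i / B = 1 := by rw [← Finset.sum_div, div_self hB]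
    have hx : ∀ i ∈ s, a i / b i ∈ Set.Ici (0 : ℝ) := fun i hi =>
      div_nonneg (ha i hi) (hb i hi)
    have hw : ∀ i ∈ s, 0 ≤ b i / B := fun i hi => div_nonneg (hb i hi) hBpos.le
    have jensen := Real.convexOn_mul_log.map_sum_le hw h1 hx
    simp only [smul_eq_mul] at jensen
    have hsum : ∑ i ∈ s, b i / B * (a i / b i) = (∑ i ∈ s, a i) / B := by
      rw [Finset.sum_div]
      refine Finset.sum_congr rfl fun i hi => ?_
      by_cases hbi : b i = 0
      · rw [hbi, hab i hi hbi]; simp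
      · field_simp
    have hrhs : ∑ i ∈ s, b i / B * (a i / b i * Real.log (a i / b i)) =
        (∑ i ∈ s, a i * Real.log (a i / b i)) / B := by
      rw [Finset.sum_div]
      refine Finset.sum_congr rfl fun i hi => ?_
      by_cases hbi : b i = 0
      · rw [hbi, hab i hi hbi]; simp
      · field_simp
    rw [hsum, hrhs] at jensen
    have := mul_le_mul_of_nonneg_right jensen hBpos.le
    rw [div_mul_cancel₀ _ hB] at this
    calc (∑ i ∈ s, a i) * Real.log ((∑ i ∈ s, a i) / B)
        = (∑ i ∈ s, a i) / B * Real.log ((∑ i ∈ s, a i) / B) * B := by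
          field_simp
      _ ≤ ∑ i ∈ s, a i * Real.log (a i / b i) := this

/-- the KL control problem on path measures with terminal marginal
constraint `π_T = π^target` is solved by the Doob h-transform kernels
`p* = p·u_{t+1}/u_t` with `u_T = π^target/π_T^prior`; the tilted chain meets the
terminal constraint, its path-KL to the prior equals `KL(π^target ‖ π_T^prior)`,
and any Markov control meeting the constraint has at least this path-KL cost. -/
theorem kl_control_optimal_value
    {S : Type*} [Fintype S] [DecidableEq S] (T : ℕ) (p : ℕ → S → S → ℝ) (s0 : S)
    (hp : ∀ t, t < T → ∀ s : S, (∀ s', 0 ≤ p t s s') ∧ ∑ s', p t s s' = 1)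
    (πtgt : S → ℝ)
    (htgt0 : ∀ s, 0 ≤ πtgt s) (htgt1 : ∑ s, πtgt s = 1)
    (hdom : ∀ s, 0 < πtgt s → 0 < marg p 0 s0 T s)
    (u : ℕ → S → ℝ)
    (huT : ∀ s : S, u T s = πtgt s / marg p 0 s0 T s)
    (hurec : ∀ t, t < T → ∀ s : S, u t s = ∑ s', p t s s' * u (t + 1) s')
    (pstar : ℕ → S → S → ℝ)
    (hpstar : ∀ t s s', pstar t s s' = p t s s' * u (t + 1) s' / u t s) :
    (∀ sT : S, marg pstar 0 s0 T sT = πtgt sT) ∧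
    (∑ f : Fin (T + 1) → S,
        pathLaw T pstar s0 f * Real.log (pathLaw T pstar s0 f / pathLaw T p s0 f) =
      ∑ sT, πtgt sT * Real.log (πtgt sT / marg p 0 s0 T sT)) ∧
    (∀ q : ℕ → S → S → ℝ,
      (∀ t, t < T → ∀ s : S, (∀ s', 0 ≤ q t s s') ∧ ∑ s', q t s s' = 1) →
      (∀ t, t < T → ∀ s s' : S, p t s s' = 0 → q t s s' = 0) →
      (∀ sT : S, marg q 0 s0 T sT = πtgt sT) →
      ∑ sT, πtgt sT * Real.log (πtgt sT / marg p 0 s0 T sT) ≤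
        ∑ f : Fin (T + 1) → S,
          pathLaw T q s0 f * Real.log (pathLaw T q s0 f / pathLaw T p s0 f)) := by
  have hp0 : ∀ t, t < T → ∀ s s', 0 ≤ p t s s' := fun t ht s s' => (hp t ht s).1 s'
  have hmargp : ∀ s, 0 ≤ marg p 0 s0 T s := marg_nonneg p s0 T hp0
  have hvanish : ∀ s, marg p 0 s0 T s = 0 → πtgt s = 0 := by
    intro s h
    by_contra hne
    have hpos : 0 < πtgt s := lt_of_le_of_ne (htgt0 s) (Ne.symm hne)
    have := hdom s hpos
    rw [h] at this
    exact lt_irrefl 0 this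
  have hu : ∀ t, t ≤ T → ∀ s, 0 ≤ u t s := by
    have key : ∀ k t, T - t = k → t ≤ T → ∀ s, 0 ≤ u t s := by
      intro k
      induction k with
      | zero =>
        intro t hk ht s
        have : t = T := by omega
        subst this
        rw [huT]
        exact div_nonneg (htgt0 s) (hmargp s)
      | succ k ih =>
        intro t hk ht s
        have htT : t < T := by omega
        rw [hurec t htT]
        exact Finset.sum_nonneg fun s' _ => mul_nonneg (hp0 t htT s s')
          (ih (t + 1) (by omega) (by omega) s')
    intro t ht
    exact key (T - t) t rfl ht
  have hzero : ∀ t, t < T → ∀ s, u t s = 0 → ∀ s', p t s s' * u (t + 1) s' = 0 := by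
    intro t ht s h s'
    have hsum : ∑ s', p t s s' * u (t + 1) s' = 0 := by rw [← hurec t ht]; exact h
    have hnn : ∀ s' ∈ Finset.univ, (0:ℝ) ≤ p t s s' * u (t + 1) s' :=
      fun s' _ => mul_nonneg (hp0 t ht s s') (hu (t + 1) ht s')
    exact (Finset.sum_eq_zero_iff_of_nonneg hnn).mp hsum s' (Finset.mem_univ s')
  have humargT : ∑ s, marg p 0 s0 T s * u T s = 1 := by
    have hterm : ∀ s, marg p 0 s0 T s * u T s = πtgt s := by
      intro s
      rw [huT]
      by_cases h : marg p 0 s0 T s = 0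
      · rw [h, zero_mul, hvanish s h]
      · rw [mul_comm, div_mul_cancel₀ _ h]
    rw [Finset.sum_congr rfl fun s _ => hterm s, htgt1]
  have hu0 : u 0 s0 = 1 := by
    have key : ∀ k t, T - t = k → t ≤ T → ∑ s, marg p 0 s0 t s * u t s = 1 := by
      intro k
      induction k with
      | zero =>
        intro t hk ht
        have : t = T := by omega
        subst this
        exact humargT
      | succ k ih =>
        intro t hk ht
        have htT : t < T := by omega
        have step : ∑ s, marg p 0 s0 t s * u t s =
            ∑ s', marg p 0 s0 (t + 1) s' * u (t + 1) s' := by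
          calc ∑ s, marg p 0 s0 t s * u t s
              = ∑ s, ∑ s', marg p 0 s0 t s * (p t s s' * u (t + 1) s') := by
                refine Finset.sum_congr rfl fun s _ => ?_
                rw [hurec t htT, Finset.mul_sum]
            _ = ∑ s', ∑ s, marg p 0 s0 t s * (p t s s' * u (t + 1) s') := Finset.sum_comm
            _ = ∑ s', marg p 0 s0 (t + 1) s' * u (t + 1) s' := by
                refine Finset.sum_congr rfl fun s' _ => ?_
                rw [marg_succ, zero_add, Finset.sum_mul]
                exact Finset.sum_congr rfl fun s _ => by ring
        rw [step]
        exact ih (t + 1) (by omega) (by omega)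
    have h0 := key T 0 (by omega) (by omega)
    rw [Finset.sum_congr rfl fun s (_ : s ∈ Finset.univ) => by rw [marg_zero]] at h0
    simpa [Finset.sum_ite_eq'] using h0
  have hmargstar : ∀ k, k ≤ T → ∀ s, marg pstar 0 s0 k s = marg p 0 s0 k s * u k s := by
    intro k
    induction k with
    | zero =>
      intro _ s
      rw [marg_zero, marg_zero]
      by_cases h : s = s0
      · rw [if_pos h, h, hu0, one_mul]
      · rw [if_neg h, zero_mul]
    | succ k ih =>
      intro hk s'
      have hkT : k < T := hk
      rw [marg_succ, marg_succ, zero_add]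
      have hterm : ∀ s, marg pstar 0 s0 k s * pstar k s s' =
          marg p 0 s0 k s * (p k s s' * u (k + 1) s') := by
        intro s
        rw [ih (le_of_lt hkT) s, hpstar]
        by_cases h : u k s = 0
        · rw [h, mul_zero, zero_mul, hzero k hkT s h s', mul_zero]
        · field_simp
      rw [Finset.sum_congr rfl fun s _ => hterm s, Finset.sum_mul]
      exact Finset.sum_congr rfl fun s _ => by ring
  have part1 : ∀ sT, marg pstar 0 s0 T sT = πtgt sT := by
    intro sT
    rw [hmargstar T le_rfl sT, huT]
    by_cases h : marg p 0 s0 T sT = 0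
    · rw [h, zero_mul, hvanish sT h]
    · rw [mul_comm, div_mul_cancel₀ _ h]
  have hpath : ∀ f : Fin (T + 1) → S,
      pathLaw T pstar s0 f = pathLaw T p s0 f * u T (f (Fin.last T)) := by
    intro f
    by_cases h0 : f 0 = s0
    case neg =>
      unfold pathLaw
      rw [if_neg h0, zero_mul, zero_mul, zero_mul]
    case pos =>
      set F : ℕ → S := fun i => f ⟨min i T, by omega⟩ with hF
      have hFt : ∀ t : Fin T, F ↑t = f t.castSucc := by
        intro t
        simp only [hF]
        congr 1
        exact Fin.ext (by simp [Nat.min_eq_left t.isLt.le])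
      have hFt1 : ∀ t : Fin T, F (↑t + 1) = f t.succ := by
        intro t
        simp only [hF]
        congr 1
        exact Fin.ext (by simp [Nat.min_eq_left (Nat.succ_le_of_lt t.isLt)])
      have hF0 : F 0 = f 0 := by
        simp only [hF]
        congr 1
      have hFT : F T = f (Fin.last T) := by
        simp only [hF]
        congr 1
        exact Fin.ext (by simp)
      have tel : ∀ n, n ≤ T →
          (∏ t ∈ Finset.range n, pstar t (F t) (F (t + 1))) * u 0 (F 0) =
          (∏ t ∈ Finset.range n, p t (F t) (F (t + 1))) * u n (F n) := by
        intro n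
        induction n with
        | zero => intro _; simp
        | succ n ih =>
          intro hn
          have hnT : n < T := hn
          rw [Finset.prod_range_succ, Finset.prod_range_succ]
          by_cases h : u n (F n) = 0
          · rw [hpstar, h, div_zero, mul_zero, zero_mul, mul_assoc,
              hzero n hnT (F n) h (F (n + 1)), mul_zero]
          · rw [mul_right_comm, ih (le_of_lt hnT), hpstar]
            field_simp
      have conv : ∀ r : ℕ → S → S → ℝ,
          (∏ t : Fin T, r ↑t (f t.castSucc) (f t.succ)) =
          ∏ t ∈ Finset.range T, r t (F t) (F (t + 1)) := by
        intro r
        rw [← Fin.prod_univ_eq_prod_range (fun t => r t (F t) (F (t + 1))) T]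
        exact Finset.prod_congr rfl fun t _ => by rw [hFt t, hFt1 t]
      unfold pathLaw
      rw [if_pos h0, one_mul, one_mul, conv pstar, conv p]
      have htel := tel T le_rfl
      rw [hF0, h0, hu0, mul_one] at htel
      rw [htel, hFT]
  have part2 : (∑ f : Fin (T + 1) → S,
      pathLaw T pstar s0 f * Real.log (pathLaw T pstar s0 f / pathLaw T p s0 f)) =
      ∑ sT, πtgt sT * Real.log (πtgt sT / marg p 0 s0 T sT) := by
    have step1 : ∀ f : Fin (T + 1) → S,
        pathLaw T pstar s0 f * Real.log (pathLaw T pstar s0 f / pathLaw T p s0 f) =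
        pathLaw T pstar s0 f * Real.log (u T (f (Fin.last T))) := by
      intro f
      by_cases hz : pathLaw T pstar s0 f = 0
      · rw [hz, zero_mul, zero_mul]
      · have hne : pathLaw T p s0 f ≠ 0 := by
          intro hp0'
          exact hz (by rw [hpath f, hp0', zero_mul])
        congr 1
        rw [hpath f, mul_div_cancel_left₀ _ hne]
    calc ∑ f : Fin (T + 1) → S,
          pathLaw T pstar s0 f * Real.log (pathLaw T pstar s0 f / pathLaw T p s0 f)
        = ∑ f : Fin (T + 1) → S,
            pathLaw T pstar s0 f * Real.log (u T (f (Fin.last T))) :=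
          Finset.sum_congr rfl fun f _ => step1 f
      _ = ∑ s, marg pstar 0 s0 T s * Real.log (u T s) :=
          sum_pathLaw_mul T pstar s0 (fun s => Real.log (u T s))
      _ = ∑ sT, πtgt sT * Real.log (πtgt sT / marg p 0 s0 T sT) := by
          refine Finset.sum_congr rfl fun s _ => ?_
          rw [part1 s, huT s]
  refine ⟨part1, part2, ?_⟩
  intro q hq hac hqT
  have hq0 : ∀ t, t < T → ∀ s s', 0 ≤ q t s s' := fun t ht s s' => (hq t ht s).1 s'
  have hQ0 : ∀ f : Fin (T + 1) → S, 0 ≤ pathLaw T q s0 f := by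
    intro f
    unfold pathLaw
    refine mul_nonneg (by positivity) (Finset.prod_nonneg fun t _ => hq0 t t.isLt _ _)
  have hP0 : ∀ f : Fin (T + 1) → S, 0 ≤ pathLaw T p s0 f := by
    intro f
    unfold pathLaw
    refine mul_nonneg (by positivity) (Finset.prod_nonneg fun t _ => hp0 t t.isLt _ _)
  have hPQ : ∀ f : Fin (T + 1) → S, pathLaw T p s0 f = 0 → pathLaw T q s0 f = 0 := by
    intro f h
    unfold pathLaw at h ⊢
    by_cases h0 : f 0 = s0
    · rw [if_pos h0, one_mul] at h
      rw [if_pos h0, one_mul]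
      obtain ⟨t, _, ht⟩ := Finset.prod_eq_zero_iff.mp h
      exact Finset.prod_eq_zero (Finset.mem_univ t) (hac t t.isLt _ _ ht)
    · rw [if_neg h0, zero_mul]
  have fiber : ∀ (r : ℕ → S → S → ℝ) (sT : S),
      ∑ f ∈ Finset.univ.filter (fun f : Fin (T + 1) → S => f (Fin.last T) = sT),
        pathLaw T r s0 f = marg r 0 s0 T sT := by
    intro r sT
    have h := sum_pathLaw_mul T r s0 (fun s => if s = sT then (1 : ℝ) else 0)
    simp only [mul_ite, mul_one, mul_zero, Finset.sum_ite_eq', Finset.mem_univ,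
      if_true] at h
    rw [Finset.sum_filter]
    exact h
  rw [← Finset.sum_fiberwise Finset.univ (fun f : Fin (T + 1) → S => f (Fin.last T))
      (fun f => pathLaw T q s0 f * Real.log (pathLaw T q s0 f / pathLaw T p s0 f))]
  refine Finset.sum_le_sum fun sT _ => ?_
  have key := log_sum_inequality
    (Finset.univ.filter (fun f : Fin (T + 1) → S => f (Fin.last T) = sT))
    (fun f => pathLaw T q s0 f) (fun f => pathLaw T p s0 f)
    (fun f _ => hQ0 f) (fun f _ => hP0 f) (fun f _ => hPQ f)
  rw [fiber q sT, fiber p sT, hqT sT] at key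
  exact key
end

section
/- The Decision Flow transition formula is well-defined and correct: p_t^*(s_{t+1}|s_t) ∝ p_t^{prior}(s_{t+1}|s_t) · Σ_{s'_T} [exp(-E(s'_T)) G_{t+1}(s_{t+1}|s'_T) / π_T^{prior}(s'_T)] defines stochastic kernels whose induced chain started from s_0 = ∅ has terminal marginal π_T^*(σ) = exp(-E(σ))/Σ_{σ'} exp(-E(σ')). -/
/-- Auxiliary value function for the Decision Flow proof. -/
noncomputable def dfW {S : Type*} [Fintype S] [DecidableEq S]
    (p : ℕ → S → S → ℝ) (s0 : S) (T : ℕ) (G : ℕ → S → S → ℝ) (E : S → ℝ)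
    (t : ℕ) (s : S) : ℝ :=
  ∑ sT, Real.exp (-E sT) * G t s sT / marg p 0 s0 T sT

/-- the Decision Flow transition formula
`p*_t(s'|s) ∝ p_t(s'|s)·∑_{s_T} e^{-E(s_T)} G_{t+1}(s'|s_T)/π_T^prior(s_T)`
defines valid stochastic kernels, and the chain they induce from the initial state
`s0 = ∅` has terminal marginal equal to the Gibbs distribution of `E`. -/
theorem decision_flow_main
    {S : Type*} [Fintype S] [DecidableEq S] (T : ℕ) (p : ℕ → S → S → ℝ) (s0 : S)
    (hp : ∀ t, t < T → ∀ s : S, (∀ s', 0 ≤ p t s s') ∧ ∑ s', p t s s' = 1)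
    (G : ℕ → S → S → ℝ)
    (hGT : ∀ s s' : S, G T s s' = if s = s' then 1 else 0)
    (hGrec : ∀ t, t < T → ∀ s sT : S, G t s sT = ∑ s', p t s s' * G (t + 1) s' sT)
    (E : S → ℝ)
    (hpos : ∀ σ : S, 0 < Real.exp (-E σ) → 0 < marg p 0 s0 T σ)
    (pstar : ℕ → S → S → ℝ)
    (hpstar : ∀ t s s', pstar t s s' =
      p t s s' * (∑ sT, Real.exp (-E sT) * G (t + 1) s' sT / marg p 0 s0 T sT) /
        ∑ s'', p t s s'' * (∑ sT, Real.exp (-E sT) * G (t + 1) s'' sT / marg p 0 s0 T sT)) :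
    (∀ t, t < T → ∀ s : S, (∀ s', 0 ≤ pstar t s s') ∧ ∑ s', pstar t s s' = 1) ∧
    (∀ σ : S, marg pstar 0 s0 T σ = Real.exp (-E σ) / ∑ σ', Real.exp (-E σ')) := by
  classical
  have hπ : ∀ σ : S, 0 < marg p 0 s0 T σ := fun σ => hpos σ (Real.exp_pos _)
  set W : ℕ → S → ℝ := dfW p s0 T G E with hWdef
  have hwT : ∀ s, W T s = Real.exp (-E s) / marg p 0 s0 T s := by
    intro s
    simp only [hWdef, dfW, hGT, mul_ite, mul_one, mul_zero, ite_div, zero_div]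
    simp
  have hwrec : ∀ t, t < T → ∀ s, W t s = ∑ s', p t s s' * W (t + 1) s' := by
    intro t ht s
    simp only [hWdef, dfW]
    calc ∑ sT, Real.exp (-E sT) * G t s sT / marg p 0 s0 T sT
        = ∑ sT, ∑ s', p t s s' *
            (Real.exp (-E sT) * G (t + 1) s' sT / marg p 0 s0 T sT) := by
          refine Finset.sum_congr rfl fun sT _ => ?_
          rw [hGrec t ht s sT, Finset.mul_sum, Finset.sum_div]
          exact Finset.sum_congr rfl fun s' _ => by ring
      _ = ∑ s', p t s s' *
            ∑ sT, Real.exp (-E sT) * G (t + 1) s' sT / marg p 0 s0 T sT := by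
          rw [Finset.sum_comm]
          exact Finset.sum_congr rfl fun s' _ => by rw [Finset.mul_sum]
  have hwpos : ∀ t, t ≤ T → ∀ s, 0 < W t s := by
    have key : ∀ k, k ≤ T → ∀ s, 0 < W (T - k) s := by
      intro k
      induction k with
      | zero =>
        intro _ s
        rw [Nat.sub_zero, hwT]
        exact div_pos (Real.exp_pos _) (hπ s)
      | succ n ih =>
        intro hk s
        have ht : T - (n + 1) < T := by omega
        have ht1 : T - (n + 1) + 1 = T - n := by omega
        rw [hwrec _ ht s]
        have hnn : ∀ s' : S, 0 ≤ p (T - (n + 1)) s s' := (hp _ ht s).1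
        obtain ⟨s', hs'⟩ : ∃ s', 0 < p (T - (n + 1)) s s' := by
          by_contra h
          push_neg at h
          have h0 : ∑ s', p (T - (n + 1)) s s' ≤ 0 :=
            Finset.sum_nonpos (fun i _ => h i)
          linarith [(hp _ ht s).2]
        refine Finset.sum_pos' (fun i _ => mul_nonneg (hnn i) ?_)
          ⟨s', Finset.mem_univ s', ?_⟩
        · rw [ht1]; exact (ih (by omega) i).le
        · rw [ht1]; exact mul_pos hs' (ih (by omega) s')
    intro t ht s
    have := key (T - t) (by omega) s
    rwa [Nat.sub_sub_self ht] at this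
  have hpstar' : ∀ t, t < T → ∀ s s',
      pstar t s s' = p t s s' * W (t + 1) s' / W t s := by
    intro t ht s s'
    rw [hpstar t s s', hwrec t ht s]
    simp only [hWdef, dfW]
  have part1 : ∀ t, t < T → ∀ s : S,
      (∀ s', 0 ≤ pstar t s s') ∧ ∑ s', pstar t s s' = 1 := by
    intro t ht s
    constructor
    · intro s'
      rw [hpstar' t ht s s']
      exact div_nonneg (mul_nonneg ((hp t ht s).1 s') (hwpos (t + 1) ht s').le)
        (hwpos t ht.le s).le
    · calc ∑ s', pstar t s s'
          = (∑ s', p t s s' * W (t + 1) s') / W t s := by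
            rw [Finset.sum_div]
            exact Finset.sum_congr rfl fun s' _ => hpstar' t ht s s'
        _ = W t s / W t s := by rw [← hwrec t ht s]
        _ = 1 := div_self (hwpos t ht.le s).ne'
  have margkey : ∀ k, k ≤ T → ∀ s, marg pstar 0 s0 k s =
      marg p 0 s0 k s * W k s / W 0 s0 := by
    intro k
    induction k with
    | zero =>
      intro _ s
      by_cases h : s = s0 <;>
        simp [marg, h, div_self (hwpos 0 (Nat.zero_le T) s0).ne']
    | succ n ih =>
      intro hk s'
      have hn : n < T := hk
      have e1 : marg pstar 0 s0 (n + 1) s' = ∑ s, marg pstar 0 s0 n s * pstar n s s' := by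
        simp [marg]
      have e2 : marg p 0 s0 (n + 1) s' = ∑ s, marg p 0 s0 n s * p n s s' := by
        simp [marg]
      rw [e1, e2, Finset.sum_mul, Finset.sum_div]
      refine Finset.sum_congr rfl fun s _ => ?_
      rw [ih hn.le s, hpstar' n hn s s']
      have h1 := (hwpos n hn.le s).ne'
      have h2 := (hwpos 0 (Nat.zero_le T) s0).ne'
      field_simp
  have hG0 : ∀ sT, G 0 s0 sT = marg p 0 s0 T sT := by
    have key : ∀ k, k ≤ T → ∀ sT,
        ∑ s, marg p 0 s0 (T - k) s * G (T - k) s sT = marg p 0 s0 T sT := by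
      intro k
      induction k with
      | zero =>
        intro _ sT
        simp [hGT, mul_ite]
      | succ n ih =>
        intro hk sT
        have ht : T - (n + 1) < T := by omega
        have ht1 : T - (n + 1) + 1 = T - n := by omega
        calc ∑ s, marg p 0 s0 (T - (n + 1)) s * G (T - (n + 1)) s sT
            = ∑ s, ∑ s', marg p 0 s0 (T - (n + 1)) s *
                (p (T - (n + 1)) s s' * G (T - n) s' sT) := by
              refine Finset.sum_congr rfl fun s _ => ?_
              rw [hGrec _ ht s sT, ht1, Finset.mul_sum]
          _ = ∑ s', (∑ s, marg p 0 s0 (T - (n + 1)) s * p (T - (n + 1)) s s') *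
                G (T - n) s' sT := by
              rw [Finset.sum_comm]
              refine Finset.sum_congr rfl fun s' _ => ?_
              rw [Finset.sum_mul]
              exact Finset.sum_congr rfl fun s _ => by ring
          _ = ∑ s', marg p 0 s0 (T - n) s' * G (T - n) s' sT := by
              refine Finset.sum_congr rfl fun s' _ => ?_
              congr 1
              rw [← ht1]
              simp [marg]
          _ = marg p 0 s0 T sT := ih (by omega) sT
    intro sT
    have h := key T le_rfl sT
    simp [marg] at h
    exact h
  have hW0 : W 0 s0 = ∑ σ, Real.exp (-E σ) := by
    simp only [hWdef, dfW]
    refine Finset.sum_congr rfl fun sT _ => ?_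
    rw [hG0 sT, mul_div_assoc, div_self (hπ sT).ne', mul_one]
  refine ⟨part1, fun σ => ?_⟩
  rw [margkey T le_rfl σ, hwT σ, hW0, ← mul_div_assoc, mul_comm, mul_div_assoc,
    div_self (hπ σ).ne', mul_one]
end

section
/- The time-reversal formula: the h-transformed optimal chain p_t^* conditioned to end at terminal state s_T has transition probabilities p_t^*(s_{t+1}|s_t, X_T = s_T) = p_t^{prior}(s_{t+1}|s_t) G_{t+1}(s_{t+1}|s_T)/G_t(s_t|s_T), independent of the energy E; i.e., conditioned on the endpoint, the optimal chain coincides with the prior bridge. -/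
/-- time-reversal / bridge formula. The optimal Decision Flow chain
`p*`, conditioned to end at terminal state `s_T`, has transition probabilities
`p*_t(s'|s)·G*_{t+1}(s'|s_T)/G*_t(s|s_T) = p_t^prior(s'|s)·G_{t+1}(s'|s_T)/G_t(s|s_T)`,
independent of the energy `E`: conditioned on the endpoint, the optimal chain
coincides with the prior bridge. -/
theorem conditioned_optimal_chain_is_prior_bridge
    {S : Type*} [Fintype S] [DecidableEq S] (T : ℕ) (p : ℕ → S → S → ℝ) (s0 : S)
    (hp : ∀ t, t < T → ∀ s : S, (∀ s', 0 ≤ p t s s') ∧ ∑ s', p t s s' = 1)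
    (G : ℕ → S → S → ℝ)
    (hGT : ∀ s s' : S, G T s s' = if s = s' then 1 else 0)
    (hGrec : ∀ t, t < T → ∀ s sT : S, G t s sT = ∑ s', p t s s' * G (t + 1) s' sT)
    (E : S → ℝ)
    (hpos : ∀ σ : S, 0 < marg p 0 s0 T σ)
    (pstar : ℕ → S → S → ℝ)
    (hpstar : ∀ t s s', pstar t s s' =
      p t s s' * (∑ sT, Real.exp (-E sT) * G (t + 1) s' sT / marg p 0 s0 T sT) /
        ∑ s'', p t s s'' * (∑ sT, Real.exp (-E sT) * G (t + 1) s'' sT / marg p 0 s0 T sT))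
    (Gstar : ℕ → S → S → ℝ)
    (hGstarT : ∀ s s' : S, Gstar T s s' = if s = s' then 1 else 0)
    (hGstarrec : ∀ t, t < T → ∀ s sT : S,
      Gstar t s sT = ∑ s', pstar t s s' * Gstar (t + 1) s' sT) :
    ∀ t, t < T → ∀ s s' sT : S, 0 < G t s sT →
      pstar t s s' * Gstar (t + 1) s' sT / Gstar t s sT =
        p t s s' * G (t + 1) s' sT / G t s sT := by
  set m := marg p 0 s0 T with hm
  set h : ℕ → S → ℝ := fun t s => ∑ sT, Real.exp (-E sT) * G t s sT / m sT with hh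
  -- G is nonnegative
  have Gnn : ∀ n t, t + n = T → ∀ s sT : S, 0 ≤ G t s sT := by
    intro n
    induction n with
    | zero =>
      intro t ht s sT
      have : t = T := by omega
      subst this
      rw [hGT]; split <;> norm_num
    | succ n ih =>
      intro t ht s sT
      have htT : t < T := by omega
      rw [hGrec t htT]
      exact Finset.sum_nonneg fun s' _ =>
        mul_nonneg ((hp t htT s).1 s') (ih (t + 1) (by omega) s' sT)
  -- rows of G sum to 1
  have Gsum : ∀ n t, t + n = T → ∀ s : S, ∑ sT, G t s sT = 1 := by
    intro n
    induction n with
    | zero =>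
      intro t ht s
      have : t = T := by omega
      subst this
      simp [hGT]
    | succ n ih =>
      intro t ht s
      have htT : t < T := by omega
      calc ∑ sT, G t s sT = ∑ sT, ∑ s', p t s s' * G (t + 1) s' sT := by
            exact Finset.sum_congr rfl fun sT _ => hGrec t htT s sT
        _ = ∑ s', ∑ sT, p t s s' * G (t + 1) s' sT := Finset.sum_comm
        _ = ∑ s', p t s s' * ∑ sT, G (t + 1) s' sT := by
            simp [Finset.mul_sum]
        _ = ∑ s', p t s s' := by
            refine Finset.sum_congr rfl fun s' _ => ?_
            rw [ih (t + 1) (by omega) s', mul_one]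
        _ = 1 := (hp t htT s).2
  -- h is positive
  have hpos_h : ∀ t, t ≤ T → ∀ s : S, 0 < h t s := by
    intro t ht s
    have hsum : ∑ sT, G t s sT = 1 := Gsum (T - t) t (by omega) s
    have : ∃ sT ∈ Finset.univ, G t s sT ≠ 0 :=
      Finset.exists_ne_zero_of_sum_ne_zero (by rw [hsum]; norm_num)
    obtain ⟨sT0, _, hsT0⟩ := this
    have hG0 : 0 < G t s sT0 := lt_of_le_of_ne (Gnn (T - t) t (by omega) s sT0) (Ne.symm hsT0)
    refine Finset.sum_pos' (fun sT _ => ?_) ⟨sT0, Finset.mem_univ _, ?_⟩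
    · exact div_nonneg (mul_nonneg (Real.exp_nonneg _) (Gnn (T - t) t (by omega) s sT))
        (hpos sT).le
    · exact div_pos (mul_pos (Real.exp_pos _) hG0) (hpos sT0)
  -- denominator in pstar equals h t s
  have hden : ∀ t, t < T → ∀ s : S, ∑ s'', p t s s'' * h (t + 1) s'' = h t s := by
    intro t ht s
    simp only [hh, Finset.mul_sum]
    rw [Finset.sum_comm]
    refine Finset.sum_congr rfl fun sT _ => ?_
    rw [hGrec t ht s sT, Finset.mul_sum, Finset.sum_div]
    exact Finset.sum_congr rfl fun s'' _ => by ring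
  -- bridge formula for Gstar
  have key : ∀ n t, t + n = T → ∀ s sT : S,
      Gstar t s sT = G t s sT * (Real.exp (-E sT) / m sT) / h t s := by
    intro n
    induction n with
    | zero =>
      intro t ht s sT
      have : t = T := by omega
      subst this
      have hhT : h t s = Real.exp (-E s) / m s := by
        simp [hh, hGT, mul_ite, mul_zero, ite_mul, zero_mul, div_eq_mul_inv,
          Finset.sum_ite_eq]
      rw [hGstarT, hGT, hhT]
      by_cases hc : s = sT
      · subst hc
        rw [if_pos rfl, one_mul, div_self ((div_pos (Real.exp_pos _) (hpos _)).ne')]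
      · simp [hc]
    | succ n ih =>
      intro t ht s sT
      have htT : t < T := by omega
      have h1pos : ∀ s' : S, 0 < h (t + 1) s' := fun s' => hpos_h (t + 1) (by omega) s'
      rw [hGstarrec t htT]
      have step : ∀ s' : S, pstar t s s' * Gstar (t + 1) s' sT =
          (Real.exp (-E sT) / m sT) / h t s * (p t s s' * G (t + 1) s' sT) := by
        intro s'
        rw [hpstar, ih (t + 1) (by omega) s' sT]
        have e1 : (∑ sTT, Real.exp (-E sTT) * G (t + 1) s' sTT / m sTT) = h (t + 1) s' := rfl
        have e2 : (∑ s'', p t s s'' * ∑ sTT, Real.exp (-E sTT) * G (t + 1) s'' sTT / m sTT)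
            = h t s := hden t htT s
        rw [e1, e2]
        have h1 : h (t + 1) s' ≠ 0 := (h1pos s').ne'
        have expand : p t s s' * h (t + 1) s' / h t s *
            (G (t + 1) s' sT * (Real.exp (-E sT) / m sT) / h (t + 1) s') =
            h (t + 1) s' / h (t + 1) s' *
              (Real.exp (-E sT) / m sT / h t s * (p t s s' * G (t + 1) s' sT)) := by
          ring
        rw [expand, div_self h1, one_mul]
      rw [Finset.sum_congr rfl fun s' _ => step s', ← Finset.mul_sum,
        ← hGrec t htT s sT]
      ring
  -- conclude
  intro t ht s s' sT hG
  have hG1nn : 0 ≤ G (t + 1) s' sT := Gnn (T - (t + 1)) (t + 1) (by omega) s' sT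
  have h0 : (0:ℝ) < h t s := hpos_h t (by omega) s
  have h1 : (0:ℝ) < h (t + 1) s' := hpos_h (t + 1) (by omega) s'
  have hc : (0:ℝ) < Real.exp (-E sT) / m sT := div_pos (Real.exp_pos _) (hpos sT)
  have e1 : Gstar t s sT = G t s sT * (Real.exp (-E sT) / m sT) / h t s :=
    key (T - t) t (by omega) s sT
  have e2 : Gstar (t + 1) s' sT = G (t + 1) s' sT * (Real.exp (-E sT) / m sT) / h (t + 1) s' :=
    key (T - (t + 1)) (t + 1) (by omega) s' sT
  have e3 : pstar t s s' = p t s s' * h (t + 1) s' / h t s := by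
    rw [hpstar]
    have e2' : (∑ s'', p t s s'' * ∑ sTT, Real.exp (-E sTT) * G (t + 1) s'' sTT / m sTT)
        = h t s := hden t ht s
    rw [e2']
  rw [e1, e2, e3]
  have expand1 : p t s s' * h (t + 1) s' / h t s *
      (G (t + 1) s' sT * (Real.exp (-E sT) / m sT) / h (t + 1) s') =
      h (t + 1) s' / h (t + 1) s' *
        (Real.exp (-E sT) / m sT / h t s * (p t s s' * G (t + 1) s' sT)) := by
    ring
  rw [expand1, div_self h1.ne', one_mul]
  have expand2 : Real.exp (-E sT) / m sT / h t s * (p t s s' * G (t + 1) s' sT) /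
      (G t s sT * (Real.exp (-E sT) / m sT) / h t s) =
      (Real.exp (-E sT) / m sT / h t s) / (Real.exp (-E sT) / m sT / h t s) *
        (p t s s' * G (t + 1) s' sT / G t s sT) := by
    ring
  rw [expand2, div_self (div_pos hc h0).ne', one_mul]
end

section
/- Uniqueness of the consistent h-transform: if two families of kernels q_t and q'_t are both absolutely continuous with respect to p_t^{prior}, both of h-transform form q_t(s'|s) = p_t^{prior}(s'|s) v_{t+1}(s')/v_t(s) for positive backward-harmonic v, and both induce the same terminal marginal exp(-E(·))/Z from s_0, then q_t = q'_t on all states reachable from s_0. -/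
/-- uniqueness of the consistent h-transform. If two h-transformed kernel
families `q = p·v_{t+1}/v_t` and `q' = p·v'_{t+1}/v'_t` (with `v, v'` strictly positive
on prior-reachable states and backward-harmonic) both induce the same Gibbs terminal
marginal `exp(-E)/Z` from `s0`, then `q = q'` on all states reachable from `s0`. -/
theorem h_transform_uniqueness
    {S : Type*} [Fintype S] [DecidableEq S] (T : ℕ) (p : ℕ → S → S → ℝ) (s0 : S)
    (hp : ∀ t, t < T → ∀ s : S, (∀ s', 0 ≤ p t s s') ∧ ∑ s', p t s s' = 1)
    (E : S → ℝ)
    (v v' : ℕ → S → ℝ)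
    (hv : ∀ t, t ≤ T → ∀ s : S, 0 < marg p 0 s0 t s → 0 < v t s)
    (hv' : ∀ t, t ≤ T → ∀ s : S, 0 < marg p 0 s0 t s → 0 < v' t s)
    (hvrec : ∀ t, t < T → ∀ s : S, v t s = ∑ s', p t s s' * v (t + 1) s')
    (hv'rec : ∀ t, t < T → ∀ s : S, v' t s = ∑ s', p t s s' * v' (t + 1) s')
    (q q' : ℕ → S → S → ℝ)
    (hq : ∀ t s s', q t s s' = p t s s' * v (t + 1) s' / v t s)
    (hq' : ∀ t s s', q' t s s' = p t s s' * v' (t + 1) s' / v' t s)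
    (hterm : ∀ sT : S, marg q 0 s0 T sT = Real.exp (-E sT) / ∑ σ, Real.exp (-E σ))
    (hterm' : ∀ sT : S, marg q' 0 s0 T sT = Real.exp (-E sT) / ∑ σ, Real.exp (-E σ)) :
    ∀ t, t < T → ∀ s : S, 0 < marg p 0 s0 t s → ∀ s', q t s s' = q' t s s' := by
  have hm00 : (0:ℝ) < marg p 0 s0 0 s0 := by simp [marg]
  -- nonnegativity of prior marginals up to time T
  have hmnn : ∀ k, k ≤ T → ∀ s, 0 ≤ marg p 0 s0 k s := by
    intro k
    induction k with
    | zero => intro _ s; simp only [marg]; split <;> norm_num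
    | succ k ih =>
      intro hk s'
      have hk' : k < T := hk
      simp only [marg, Nat.zero_add]
      exact Finset.sum_nonneg fun s _ =>
        mul_nonneg (ih (le_of_lt hk') s) ((hp k hk' s).1 s')
  have hv0 : 0 < v 0 s0 := hv 0 (Nat.zero_le T) s0 hm00
  have hv'0 : 0 < v' 0 s0 := hv' 0 (Nat.zero_le T) s0 hm00
  -- lower bound for successor marginals
  have hmsucc : ∀ k, k < T → ∀ s s' : S,
      marg p 0 s0 k s * p k s s' ≤ marg p 0 s0 (k+1) s' := by
    intro k hk s s'
    have h : marg p 0 s0 (k+1) s' = ∑ σ, marg p 0 s0 k σ * p k σ s' := by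
      simp [marg]
    rw [h]
    refine Finset.single_le_sum (f := fun σ => marg p 0 s0 k σ * p k σ s')
      (fun σ _ => mul_nonneg (hmnn k (le_of_lt hk) σ) ((hp k hk σ).1 s'))
      (Finset.mem_univ s)
  -- key formula: marginals of the h-transformed chain
  have key : ∀ (w : ℕ → S → ℝ) (r : ℕ → S → S → ℝ),
      (∀ t, t ≤ T → ∀ s : S, 0 < marg p 0 s0 t s → 0 < w t s) →
      (∀ t s s', r t s s' = p t s s' * w (t + 1) s' / w t s) →
      ∀ k, k ≤ T → ∀ s, marg r 0 s0 k s = marg p 0 s0 k s * w k s / w 0 s0 := by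
    intro w r hw hr k
    have hw0 : w 0 s0 ≠ 0 := (hw 0 (Nat.zero_le T) s0 hm00).ne'
    induction k with
    | zero =>
      intro _ s
      by_cases h : s = s0
      · subst h; simp only [marg, if_pos rfl]; field_simp
      · simp [marg, h]
    | succ k ih =>
      intro hk s'
      have hkT : k < T := hk
      have h1 : marg r 0 s0 (k+1) s' = ∑ s, marg r 0 s0 k s * r k s s' := by
        simp [marg]
      rw [h1]
      have step : ∀ s, marg r 0 s0 k s * r k s s'
          = (marg p 0 s0 k s * p k s s') * (w (k+1) s' / w 0 s0) := by
        intro s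
        rw [ih (le_of_lt hkT), hr]
        rcases eq_or_lt_of_le (hmnn k (le_of_lt hkT) s) with h0 | h0
        · rw [← h0]; ring
        · have hwk : w k s ≠ 0 := (hw k (le_of_lt hkT) s h0).ne'
          field_simp
      rw [Finset.sum_congr rfl (fun s _ => step s), ← Finset.sum_mul]
      have h2 : marg p 0 s0 (k+1) s' = ∑ s, marg p 0 s0 k s * p k s s' := by
        simp [marg]
      rw [h2]
      ring
  -- terminal ratios agree on the support
  have hT : ∀ sT, 0 < marg p 0 s0 T sT →
      v T sT / v 0 s0 = v' T sT / v' 0 s0 := by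
    intro sT hm
    have h1 := key v q hv hq T le_rfl sT
    have h2 := key v' q' hv' hq' T le_rfl sT
    rw [hterm sT] at h1
    rw [hterm' sT] at h2
    have h3 := h1.symm.trans h2
    rw [mul_div_assoc, mul_div_assoc] at h3
    exact mul_left_cancel₀ hm.ne' h3
  -- backward propagation of the ratio equality
  have ratio : ∀ d t, t + d = T → ∀ s, 0 < marg p 0 s0 t s →
      v t s / v 0 s0 = v' t s / v' 0 s0 := by
    intro d
    induction d with
    | zero =>
      intro t ht s hm
      have : t = T := by omega
      subst this
      exact hT s hm
    | succ d ih =>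
      intro t ht s hm
      have htT : t < T := by omega
      rw [hvrec t htT, hv'rec t htT, Finset.sum_div, Finset.sum_div]
      refine Finset.sum_congr rfl fun s' _ => ?_
      rcases eq_or_lt_of_le ((hp t htT s).1 s') with h0 | h0
      · rw [← h0]; simp
      · have hm' : 0 < marg p 0 s0 (t+1) s' :=
          lt_of_lt_of_le (mul_pos hm h0) (hmsucc t htT s s')
        have hrec := ih (t+1) (by omega) s' hm'
        rw [mul_div_assoc, mul_div_assoc, hrec]
  -- conclusion
  intro t ht s hm s'
  rw [hq, hq']
  rcases eq_or_lt_of_le ((hp t ht s).1 s') with h0 | h0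
  · rw [← h0]; simp
  · have hm' : 0 < marg p 0 s0 (t+1) s' :=
      lt_of_lt_of_le (mul_pos hm h0) (hmsucc t ht s s')
    have e1 := ratio (T - t) t (by omega) s hm
    have e2 := ratio (T - (t+1)) (t+1) (by omega) s' hm'
    have hvt := hv t (le_of_lt ht) s hm
    have hv't := hv' t (le_of_lt ht) s hm
    have e1' : v t s * v' 0 s0 = v' t s * v 0 s0 :=
      (div_eq_div_iff hv0.ne' hv'0.ne').mp e1
    have e2' : v (t+1) s' * v' 0 s0 = v' (t+1) s' * v 0 s0 :=
      (div_eq_div_iff hv0.ne' hv'0.ne').mp e2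
    rw [div_eq_div_iff hvt.ne' hv't.ne']
    have hc : v 0 s0 * v' 0 s0 ≠ 0 := (mul_pos hv0 hv'0).ne'
    apply mul_right_cancel₀ hc
    linear_combination (p t s s' * v' t s * v 0 s0) * e2'
      - (p t s s' * v' (t+1) s' * v 0 s0) * e1'
end

section
/- The KL-regularized control cost of the optimal Decision Flow chain equals the KL divergence between target and prior terminal marginals: C(p^*, π^*) = Σ_{s_T} π_T^{target}(s_T) log(π_T^{target}(s_T)/π_T^{prior}(s_T)), where π_T^{target}(σ) = exp(-E(σ))/Z and C is defined as in the Decision Flow MDP. -/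
open Finset Real

section MarkovChain

variable {S : Type*} {p q : ℕ → S → S → ℝ} {T : ℕ} {h : ℕ → S → ℝ}

theorem doobTransform_mul_log_div {t : ℕ} {s s' : S}
    (hq : q t s s' = p t s s' * h (t + 1) s' / h t s)
    (hts : h t s ≠ 0) (hts' : h (t + 1) s' ≠ 0) :
    q t s s' * log (q t s s' / p t s s') =
      q t s s' * (log (h (t + 1) s') - log (h t s)) := by
  by_cases hp0 : p t s s' = 0
  · simp [hq, hp0]
  · have hratio : q t s s' / p t s s' = h (t + 1) s' / h t s := by
      rw [hq]
      field_simp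
    rw [hratio, log_div hts' hts]

variable [Fintype S]

theorem marg_zero_apply [DecidableEq S] (τ : ℕ) (s0 s : S) :
    marg q τ s0 0 s = if s = s0 then 1 else 0 := rfl

theorem marg_succ_apply [DecidableEq S] (τ : ℕ) (s0 : S) (k : ℕ) (s' : S) :
    marg q τ s0 (k + 1) s' = ∑ s, marg q τ s0 k s * q (τ + k) s s' := rfl

def IsSpaceTimeHarmonic (p : ℕ → S → S → ℝ) (T : ℕ) (h : ℕ → S → ℝ) : Prop :=
  ∀ t < T, ∀ s, ∑ s', p t s s' * h (t + 1) s' = h t s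

namespace IsSpaceTimeHarmonic

/-- `h(t, X_t)` is a martingale of the chain, so its mean is constant. -/
theorem sum_marg_mul [DecidableEq S] (hh : IsSpaceTimeHarmonic p T h) (s0 : S) :
    ∀ t ≤ T, ∑ s, marg p 0 s0 t s * h t s = h 0 s0 := by
  intro t
  induction t with
  | zero => intro _; simp [marg_zero_apply]
  | succ t ih =>
    intro ht
    rw [← ih (by omega)]
    simp only [marg_succ_apply, zero_add, sum_mul]
    rw [sum_comm]
    refine sum_congr rfl fun s _ => ?_
    rw [← hh t (by omega) s, mul_sum]
    exact sum_congr rfl fun s' _ => by ring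

theorem pos (hh : IsSpaceTimeHarmonic p T h)
    (hp : ∀ t < T, ∀ s, (∀ s', 0 ≤ p t s s') ∧ ∑ s', p t s s' = 1)
    (hT : ∀ s, 0 < h T s) : ∀ t ≤ T, ∀ s, 0 < h t s := by
  intro t ht
  induction ht using Nat.decreasingInduction with
  | self => exact hT
  | of_succ t htT ih =>
    intro s
    obtain ⟨hp_nonneg, hp_sum⟩ := hp t htT s
    obtain ⟨s', -, hs'⟩ := exists_ne_zero_of_sum_ne_zero (hp_sum ▸ one_ne_zero)
    rw [← hh t htT s]
    exact sum_pos' (fun s _ => mul_nonneg (hp_nonneg s) (ih s).le)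
      ⟨s', mem_univ _, mul_pos ((hp_nonneg s').lt_of_ne' hs') (ih s')⟩

end IsSpaceTimeHarmonic

theorem sum_doobTransform_eq_one (hh : IsSpaceTimeHarmonic p T h)
    (hq : ∀ t < T, ∀ s s', q t s s' = p t s s' * h (t + 1) s' / h t s)
    (hne : ∀ t ≤ T, ∀ s, h t s ≠ 0) {t : ℕ} (ht : t < T) (s : S) :
    ∑ s', q t s s' = 1 := by
  simp only [hq t ht, ← sum_div, hh t ht s]
  exact div_self (hne t ht.le s)

theorem marg_doobTransform [DecidableEq S]
    (hq : ∀ t < T, ∀ s s', q t s s' = p t s s' * h (t + 1) s' / h t s)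
    (hne : ∀ t ≤ T, ∀ s, h t s ≠ 0) (s0 : S) :
    ∀ t ≤ T, ∀ s, marg q 0 s0 t s = marg p 0 s0 t s * h t s / h 0 s0 := by
  have h0 := hne 0 (Nat.zero_le _) s0
  intro t
  induction t with
  | zero =>
    intro _ s
    by_cases hs : s = s0
    · simp [marg_zero_apply, hs, h0]
    · simp [marg_zero_apply, hs]
  | succ t ih =>
    intro ht s'
    simp only [marg_succ_apply, zero_add, sum_mul, sum_div]
    refine sum_congr rfl fun s _ => ?_
    have hts := hne t (by omega) s
    rw [ih (by omega) s, hq t (by omega) s s']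
    field_simp

theorem sum_cost_doobTransform [DecidableEq S] (hh : IsSpaceTimeHarmonic p T h)
    (hq : ∀ t < T, ∀ s s', q t s s' = p t s s' * h (t + 1) s' / h t s)
    (hne : ∀ t ≤ T, ∀ s, h t s ≠ 0) (s0 : S) :
    ∑ t ∈ range T, ∑ s, ∑ s', marg q 0 s0 t s * (q t s s' * log (q t s s' / p t s s')) =
      ∑ s, marg q 0 s0 T s * log (h T s) - log (h 0 s0) := by
  set A : ℕ → ℝ := fun t => ∑ s, marg q 0 s0 t s * log (h t s)
  have hstep : ∀ t < T,
      ∑ s, ∑ s', marg q 0 s0 t s * (q t s s' * log (q t s s' / p t s s')) =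
        A (t + 1) - A t := by
    intro t ht
    calc _ = ∑ s, ∑ s', (marg q 0 s0 t s * q t s s' * log (h (t + 1) s') -
              marg q 0 s0 t s * q t s s' * log (h t s)) := by
          refine sum_congr rfl fun s _ => sum_congr rfl fun s' _ => ?_
          rw [doobTransform_mul_log_div (hq t ht s s') (hne t ht.le s) (hne (t + 1) ht s')]
          ring
      _ = A (t + 1) - A t := by
          simp only [sum_sub_distrib]
          congr 1
          · rw [sum_comm]
            simp only [A, marg_succ_apply, zero_add, sum_mul]
          · refine sum_congr rfl fun s _ => ?_
            rw [← sum_mul, ← mul_sum, sum_doobTransform_eq_one hh hq hne ht, mul_one]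
  rw [sum_congr rfl fun t ht => hstep t (mem_range.mp ht), sum_range_sub]
  simp [A, marg_zero_apply]

/-- The conditional expectation `E[f(X_T) | X_t = s]` given the propagators `G`. -/
def propagate (G : ℕ → S → S → ℝ) (f : S → ℝ) (t : ℕ) (s : S) : ℝ :=
  ∑ sT, G t s sT * f sT

theorem isSpaceTimeHarmonic_propagate {G : ℕ → S → S → ℝ}
    (hGrec : ∀ t < T, ∀ s sT, G t s sT = ∑ s', p t s s' * G (t + 1) s' sT) (f : S → ℝ) :
    IsSpaceTimeHarmonic p T (propagate G f) := by
  intro t ht s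
  simp only [propagate, mul_sum, hGrec t ht, sum_mul]
  rw [sum_comm]
  exact sum_congr rfl fun _ _ => sum_congr rfl fun _ _ => by ring

theorem propagate_terminal [DecidableEq S] {G : ℕ → S → S → ℝ}
    (hGT : ∀ s s', G T s s' = if s = s' then 1 else 0) (f : S → ℝ) :
    propagate G f T = f := by
  funext s
  simp [propagate, hGT]

end MarkovChain

theorem sum_div_sum_mul_log_div_div {ι : Type*} (s : Finset ι) (e m : ι → ℝ)
    (he : ∀ i ∈ s, e i ≠ 0) (hm : ∀ i ∈ s, m i ≠ 0) (hZ : ∑ j ∈ s, e j ≠ 0) :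
    ∑ i ∈ s, e i / (∑ j ∈ s, e j) * log (e i / (∑ j ∈ s, e j) / m i) =
      ∑ i ∈ s, e i / (∑ j ∈ s, e j) * log (e i / m i) - log (∑ j ∈ s, e j) := by
  have hsum : ∑ i ∈ s, e i / (∑ j ∈ s, e j) = 1 := by rw [← sum_div, div_self hZ]
  calc _ = ∑ i ∈ s, (e i / (∑ j ∈ s, e j) * log (e i / m i) -
          e i / (∑ j ∈ s, e j) * log (∑ j ∈ s, e j)) := by
        refine sum_congr rfl fun i hi => ?_
        rw [div_right_comm, log_div (div_ne_zero (he i hi) (hm i hi)) hZ]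
        ring
    _ = _ := by rw [sum_sub_distrib, ← sum_mul, hsum, one_mul]

/-- the KL-regularized control cost of the optimal Decision Flow chain
`C(p*, π*) = ∑_t ∑_{s,s'} π*_t(s) p*_t(s'|s) log(p*_t(s'|s)/p_t^prior(s'|s))` equals the
KL divergence between the target terminal marginal `π_T^target = exp(-E)/Z` and the
prior terminal marginal. -/
theorem decision_flow_cost_eq_terminal_kl
    {S : Type*} [Fintype S] [DecidableEq S] (T : ℕ) (p : ℕ → S → S → ℝ) (s0 : S)
    (hp : ∀ t, t < T → ∀ s : S, (∀ s', 0 ≤ p t s s') ∧ ∑ s', p t s s' = 1)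
    (G : ℕ → S → S → ℝ)
    (hGT : ∀ s s' : S, G T s s' = if s = s' then 1 else 0)
    (hGrec : ∀ t, t < T → ∀ s sT : S, G t s sT = ∑ s', p t s s' * G (t + 1) s' sT)
    (E : S → ℝ)
    (hpos : ∀ σ : S, 0 < Real.exp (-E σ) → 0 < marg p 0 s0 T σ)
    (pstar : ℕ → S → S → ℝ)
    (hpstar : ∀ t s s', pstar t s s' =
      p t s s' * (∑ sT, Real.exp (-E sT) * G (t + 1) s' sT / marg p 0 s0 T sT) /
        ∑ s'', p t s s'' * (∑ sT, Real.exp (-E sT) * G (t + 1) s'' sT / marg p 0 s0 T sT)) :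
    ∑ t ∈ Finset.range T, ∑ s, ∑ s',
        marg pstar 0 s0 t s *
          (pstar t s s' * Real.log (pstar t s s' / p t s s')) =
      ∑ sT, (Real.exp (-E sT) / ∑ σ, Real.exp (-E σ)) *
        Real.log ((Real.exp (-E sT) / ∑ σ, Real.exp (-E σ)) / marg p 0 s0 T sT) := by
  set ρ := marg p 0 s0 T
  have hρ : ∀ σ, 0 < ρ σ := fun σ => hpos σ (exp_pos _)
  set φ := propagate G fun sT => exp (-E sT) / ρ sT
  have hφ : ∀ t s, ∑ sT, exp (-E sT) * G t s sT / ρ sT = φ t s :=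
    fun t s => sum_congr rfl fun _ _ => by ring
  have hharm : IsSpaceTimeHarmonic p T φ := isSpaceTimeHarmonic_propagate hGrec _
  have hφT : φ T = fun sT => exp (-E sT) / ρ sT := propagate_terminal hGT _
  have hne : ∀ t ≤ T, ∀ s, φ t s ≠ 0 := fun t ht s =>
    (hharm.pos hp (fun s => hφT ▸ div_pos (exp_pos _) (hρ s)) t ht s).ne'
  have hq : ∀ t < T, ∀ s s', pstar t s s' = p t s s' * φ (t + 1) s' / φ t s := by
    intro t ht s s'
    rw [hpstar, ← hharm t ht s]
    simp only [hφ]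
  have hφ0 : φ 0 s0 = ∑ σ, exp (-E σ) := by
    rw [← hharm.sum_marg_mul s0 T le_rfl, hφT]
    exact sum_congr rfl fun σ _ => mul_div_cancel₀ _ (hρ σ).ne'
  rw [sum_cost_doobTransform hharm hq hne, hφ0, hφT,
    sum_div_sum_mul_log_div_div _ _ _ (fun _ _ => (exp_pos _).ne') (fun σ _ => (hρ σ).ne')
      (hφ0 ▸ hne 0 (Nat.zero_le _) s0)]
  congr 1
  refine sum_congr rfl fun σ _ => ?_
  rw [marg_doobTransform hq hne s0 T le_rfl, hφ0, hφT, mul_div_cancel₀ _ (hρ σ).ne']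
end
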